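/- Let N, M: A → B be quantum channels that are jointly covariant with respect to {(U(g), V(g))}_{g∈G} for a finite group G, and let D be a generalized divergence. Then the generalized channel divergence D(N‖M) = sup over all pure states ψ_{RA} with R ≅ A of D((id_R⊗N)(ψ_{RA}) ‖ (id_R⊗M)(ψ_{RA})) is equal to the same supremum restricted to pure states ψ_{RA} whose reduced state ψ_A is invariant under the symmetrizing channel, i.e., ψ_A = (1/|G|) ∑_{g∈G} U(g) ψ_A U(g)†. -/

import Mathlib

open scoped BigOperators Kronecker ComplexOrder
open Matrix MeasureTheory Filter

noncomputable section

abbrev Mat (n : ℕ) := Matrix (Fin n) (Fin n) ℂ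

/-- A density matrix: positive semidefinite with unit trace. -/
def IsDensity {ι : Type} [Fintype ι] (ρ : Matrix ι ι ℂ) : Prop :=
  ρ.PosSemidef ∧ ρ.trace = 1

/-- The trace norm ‖M‖₁ = tr √(MᴴM). -/
def traceNorm {ι : Type} [Fintype ι] [DecidableEq ι] (M : Matrix ι ι ℂ) : ℝ :=
  ((Matrix.posSemidef_conjTranspose_mul_self M).1.eigenvectorUnitary.1 *
    Matrix.diagonal (fun i => ((Real.sqrt ((Matrix.posSemidef_conjTranspose_mul_self M).1.eigenvalues i) : ℝ) : ℂ)) *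
    (star (Matrix.posSemidef_conjTranspose_mul_self M).1.eigenvectorUnitary : Matrix ι ι ℂ)).trace.re

/-- The rank-one operator |v⟩⟨v| associated to a vector. -/
def vecState {ι : Type} (v : ι → ℂ) : Matrix ι ι ℂ :=
  Matrix.of fun i j => v i * star (v j)

/-- Partial trace over the first tensor factor. -/
def ptraceLeft {R A : Type} [Fintype R] (M : Matrix (R × A) (R × A) ℂ) : Matrix A A ℂ :=
  Matrix.of fun a a' => ∑ r, M (r, a) (r, a')

/-- Partial trace over the second tensor factor. -/
def ptraceRight {A E : Type} [Fintype E] (M : Matrix (A × E) (A × E) ℂ) : Matrix A A ℂ :=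
  Matrix.of fun a a' => ∑ e, M (a, e) (a', e)

/-- The extension id_R ⊗ Φ of a linear map on matrices. -/
def idTensor {R A B : Type} (Φ : Matrix A A ℂ →ₗ[ℂ] Matrix B B ℂ) :
    Matrix (R × A) (R × A) ℂ →ₗ[ℂ] Matrix (R × B) (R × B) ℂ where
  toFun M := Matrix.of fun p q => Φ (Matrix.of fun a a' => M (p.1, a) (q.1, a')) p.2 q.2
  map_add' M N := by
    ext p q
    have h : (Matrix.of fun a a' => M (p.1, a) (q.1, a') + N (p.1, a) (q.1, a'))
        = (Matrix.of fun a a' => M (p.1, a) (q.1, a'))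
          + (Matrix.of fun a a' => N (p.1, a) (q.1, a')) := by
      ext a a'; simp [Matrix.add_apply]
    simp only [Matrix.of_apply, Matrix.add_apply]
    rw [h, map_add]
    simp [Matrix.add_apply]
  map_smul' c M := by
    ext p q
    have h : (Matrix.of fun a a' => c • M (p.1, a) (q.1, a'))
        = c • (Matrix.of fun a a' => M (p.1, a) (q.1, a')) := by
      ext a a'; simp [Matrix.smul_apply]
    simp only [Matrix.of_apply, Matrix.smul_apply]
    rw [h, Φ.map_smul]
    simp [Matrix.smul_apply]

/-- A linear map is completely positive and trace preserving (a quantum channel). -/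
def IsCPTP {A B : Type} [Fintype A] [Fintype B] (Φ : Matrix A A ℂ →ₗ[ℂ] Matrix B B ℂ) : Prop :=
  (∀ (r : ℕ) (M : Matrix (Fin r × A) (Fin r × A) ℂ), M.PosSemidef → (idTensor Φ M).PosSemidef)
    ∧ ∀ M : Matrix A A ℂ, (Φ M).trace = M.trace

/-- The tensor product Φ ⊗ Ψ of two linear maps on matrices. -/
def tensorMap {A B C D : Type} [Fintype A] [DecidableEq A] [Fintype C]
    (Φ : Matrix A A ℂ →ₗ[ℂ] Matrix B B ℂ) (Ψ : Matrix C C ℂ →ₗ[ℂ] Matrix D D ℂ) :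
    Matrix (A × C) (A × C) ℂ →ₗ[ℂ] Matrix (B × D) (B × D) ℂ where
  toFun M := Matrix.of fun p q => ∑ a : A, ∑ a' : A,
      Φ (Matrix.single a a' 1) p.1 q.1
        * Ψ (Matrix.of fun c c' => M (a, c) (a', c')) p.2 q.2
  map_add' M N := by
    ext p q
    have h : ∀ a a' : A, (Matrix.of fun c c' => M (a, c) (a', c') + N (a, c) (a', c'))
        = (Matrix.of fun c c' => M (a, c) (a', c'))
          + (Matrix.of fun c c' => N (a, c) (a', c')) := by
      intro a a'; ext c c'; simp [Matrix.add_apply]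
    simp only [Matrix.of_apply, Matrix.add_apply]
    rw [← Finset.sum_add_distrib]
    refine Finset.sum_congr rfl fun a _ => ?_
    rw [← Finset.sum_add_distrib]
    refine Finset.sum_congr rfl fun a' _ => ?_
    rw [h a a', map_add]
    simp [Matrix.add_apply, mul_add]
  map_smul' k M := by
    ext p q
    have h : ∀ a a' : A, (Matrix.of fun c c' => k * M (a, c) (a', c'))
        = k • (Matrix.of fun c c' => M (a, c) (a', c')) := by
      intro a a'; ext c c'; simp [Matrix.smul_apply, smul_eq_mul]
    simp only [Matrix.of_apply, Matrix.smul_apply, smul_eq_mul, RingHom.id_apply]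
    rw [Finset.mul_sum]
    refine Finset.sum_congr rfl fun a _ => ?_
    rw [Finset.mul_sum]
    refine Finset.sum_congr rfl fun a' _ => ?_
    rw [h a a', Ψ.map_smul]
    simp only [Matrix.smul_apply, smul_eq_mul]
    ring
  
/-- The n-fold tensor power Φ^{⊗n} of a linear map on matrices. -/
def powMap {A B : Type} [Fintype A] [DecidableEq A] [Fintype B] [DecidableEq B]
    (Φ : Matrix A A ℂ →ₗ[ℂ] Matrix B B ℂ) :
    (n : ℕ) → (Matrix (Fin n → A) (Fin n → A) ℂ →ₗ[ℂ] Matrix (Fin n → B) (Fin n → B) ℂ)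
  | 0 => (Matrix.reindexLinearEquiv ℂ ℂ (Equiv.ofUnique (Fin 0 → A) (Fin 0 → B))
      (Equiv.ofUnique (Fin 0 → A) (Fin 0 → B))).toLinearMap
  | (n + 1) =>
      (Matrix.reindexLinearEquiv ℂ ℂ (Fin.consEquiv fun _ : Fin (n + 1) => B).symm.symm
          (Fin.consEquiv fun _ : Fin (n + 1) => B).symm.symm).toLinearMap
        ∘ₗ tensorMap Φ (powMap Φ n)
        ∘ₗ (Matrix.reindexLinearEquiv ℂ ℂ (Fin.consEquiv fun _ : Fin (n + 1) => A).symm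
          (Fin.consEquiv fun _ : Fin (n + 1) => A).symm).toLinearMap

open scoped Classical in
/-- The von Neumann entropy (base 2), via the eigenvalues of a Hermitian matrix. -/
def vnEntropy {ι : Type} [Fintype ι] [DecidableEq ι] (ρ : Matrix ι ι ℂ) : ℝ :=
  if h : ρ.IsHermitian then ∑ i, -(h.eigenvalues i * Real.logb 2 (h.eigenvalues i)) else 0

/-- The function g(ε) = (1+ε)log₂(1+ε) − ε log₂ ε (with the convention 0·log 0 = 0). -/
def gfun (x : ℝ) : ℝ := (1 + x) * Real.logb 2 (1 + x) - x * Real.logb 2 x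

/-- A finite ensemble of density matrices. -/
structure Ensemble (A : Type) [Fintype A] where
  m : ℕ
  p : Fin m → ℝ
  p_nonneg : ∀ i, 0 ≤ p i
  p_sum : ∑ i, p i = 1
  ρ : Fin m → Matrix A A ℂ
  ρ_density : ∀ i, IsDensity (ρ i)

/-- A finite ensemble of pure states, given by unit vectors. -/
structure PureEnsemble (A : Type) [Fintype A] where
  m : ℕ
  p : Fin m → ℝ
  p_nonneg : ∀ i, 0 ≤ p i
  p_sum : ∑ i, p i = 1
  v : Fin m → (A → ℂ)
  pure : ∀ i, IsDensity (vecState (v i))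

/-- The Holevo information of a (channel given as a) linear map. -/
def holevoMap {A B : Type} [Fintype A] [Fintype B] [DecidableEq B]
    (Φ : Matrix A A ℂ →ₗ[ℂ] Matrix B B ℂ) : ℝ :=
  ⨆ e : Ensemble A,
    (vnEntropy (Φ (∑ i, (e.p i : ℂ) • e.ρ i)) - ∑ i, e.p i * vnEntropy (Φ (e.ρ i)))

/-- The classical capacity: the regularized Holevo information. -/
def classicalCapacity {A B : Type} [Fintype A] [DecidableEq A] [Fintype B] [DecidableEq B]
    (Φ : Matrix A A ℂ →ₗ[ℂ] Matrix B B ℂ) : ℝ :=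
  Filter.limsup (fun n : ℕ => holevoMap (powMap Φ n) / (n : ℝ)) Filter.atTop

/-- Half the diamond norm of the difference of two maps:
the supremum over reference sizes and density inputs of half the output trace distance. -/
def diamondDist {A B : Type} [Fintype A] [Fintype B] [DecidableEq B]
    (Φ Ψ : Matrix A A ℂ →ₗ[ℂ] Matrix B B ℂ) : ℝ :=
  ⨆ r : ℕ, ⨆ ρ : {ρ : Matrix (Fin r × A) (Fin r × A) ℂ // IsDensity ρ},
    (1 / 2) * traceNorm (idTensor Φ ρ.1 - idTensor Ψ ρ.1)

/-- The diamond norm of the difference of two maps (without the factor 1/2). -/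
def diamondDistFull {A B : Type} [Fintype A] [Fintype B] [DecidableEq B]
    (Φ Ψ : Matrix A A ℂ →ₗ[ℂ] Matrix B B ℂ) : ℝ :=
  ⨆ r : ℕ, ⨆ ρ : {ρ : Matrix (Fin r × A) (Fin r × A) ℂ // IsDensity ρ},
    traceNorm (idTensor Φ ρ.1 - idTensor Ψ ρ.1)

/-- Conjugation ρ ↦ W ρ Wᴴ as a linear map. -/
def conjMap {ι κ : Type} [Fintype ι] [Fintype κ] (W : Matrix κ ι ℂ) :
    Matrix ι ι ℂ →ₗ[ℂ] Matrix κ κ ℂ where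
  toFun ρ := W * ρ * Wᴴ
  map_add' ρ σ := by simp [Matrix.mul_add, Matrix.add_mul]
  map_smul' c ρ := by simp [Matrix.mul_smul, Matrix.smul_mul]

/-- A classical–quantum state ∑ₓ p(x) |x⟩⟨x| ⊗ ρ(x). -/
def cqState {X ι : Type} [DecidableEq X] (p : X → ℝ) (ρ : X → Matrix ι ι ℂ) :
    Matrix (X × ι) (X × ι) ℂ :=
  Matrix.of fun a b => if a.1 = b.1 then (p a.1 : ℂ) * ρ a.1 a.2 b.2 else 0

/-- A generalized divergence: a family of real functionals on pairs of matrices, one for each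
finite-dimensional system, satisfying the data-processing inequality under quantum channels. -/
structure GenDivergence where
  D : ∀ {ι : Type} [Fintype ι] [DecidableEq ι], Matrix ι ι ℂ → Matrix ι ι ℂ → ℝ
  data_proc : ∀ {ι κ : Type} [Fintype ι] [DecidableEq ι] [Fintype κ] [DecidableEq κ]
      (Λ : Matrix ι ι ℂ →ₗ[ℂ] Matrix κ κ ℂ), IsCPTP Λ →
      ∀ ρ σ : Matrix ι ι ℂ, IsDensity ρ → σ.PosSemidef → D (Λ ρ) (Λ σ) ≤ D ρ σ

/-- The direct-sum property of a generalized divergence on classical–quantum states. -/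
def HasDirectSum (𝒟 : GenDivergence) : Prop :=
  ∀ {X ι : Type} [Fintype X] [DecidableEq X] [Fintype ι] [DecidableEq ι]
    (p : X → ℝ), (∀ x, 0 ≤ p x) → (∑ x, p x) = 1 →
    ∀ (ρ σ : X → Matrix ι ι ℂ), (∀ x, IsDensity (ρ x)) → (∀ x, IsDensity (σ x)) →
    𝒟.D (cqState p ρ) (cqState p σ) = ∑ x, p x * 𝒟.D (ρ x) (σ x)

/-- The generalized channel divergence: optimization over pure inputs with reference R ≅ A. -/
def chanDiv (𝒟 : GenDivergence) {A B : Type} [Fintype A] [DecidableEq A]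
    [Fintype B] [DecidableEq B] (Φ Ψ : Matrix A A ℂ →ₗ[ℂ] Matrix B B ℂ) : ℝ :=
  ⨆ v : {v : A × A → ℂ // IsDensity (vecState v)},
    𝒟.D (idTensor Φ (vecState v.1)) (idTensor Ψ (vecState v.1))

/-- The maximally entangled state on A ⊗ A. -/
def maxEnt (A : Type) [Fintype A] [DecidableEq A] : Matrix (A × A) (A × A) ℂ :=
  vecState (fun p => if p.1 = p.2 then (((Real.sqrt (Fintype.card A))⁻¹ : ℝ) : ℂ) else 0)

/-- The Choi operator of a linear map on matrices. -/
def choi {A B : Type} [Fintype A] [DecidableEq A]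
    (Φ : Matrix A A ℂ →ₗ[ℂ] Matrix B B ℂ) : Matrix (A × B) (A × B) ℂ :=
  idTensor Φ (Matrix.of fun p q => if p.1 = p.2 ∧ q.1 = q.2 then 1 else 0)

/-- Separability of a bipartite operator: a finite sum of tensor products of
positive semidefinite operators. -/
def IsSepState {A B : Type} [Fintype A] [Fintype B]
    (M : Matrix (A × B) (A × B) ℂ) : Prop :=
  ∃ (k : ℕ) (P : Fin k → Matrix A A ℂ) (Q : Fin k → Matrix B B ℂ),
    (∀ i, (P i).PosSemidef) ∧ (∀ i, (Q i).PosSemidef) ∧ M = ∑ i, P i ⊗ₖ Q i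

/-- An entanglement-breaking channel: a channel whose Choi operator is separable. -/
def IsEBChannel {A B : Type} [Fintype A] [DecidableEq A] [Fintype B]
    (Φ : Matrix A A ℂ →ₗ[ℂ] Matrix B B ℂ) : Prop :=
  IsCPTP Φ ∧ IsSepState (choi Φ)

/-- φ is a purification (with reference system R on the left) of the state ρ. -/
def IsPurification {R A : Type} [Fintype R] [Fintype A]
    (φ : Matrix (R × A) (R × A) ℂ) (ρ : Matrix A A ℂ) : Prop :=
  (∃ v : R × A → ℂ, φ = vecState v) ∧ IsDensity φ ∧ ptraceLeft φ = ρ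

/-- The channel ρ ↦ tr_E (V ρ Vᴴ) induced by an isometry V : A → B ⊗ E. -/
def dilMap {A B E : Type} [Fintype A] [Fintype B] [Fintype E]
    (V : Matrix (B × E) A ℂ) : Matrix A A ℂ →ₗ[ℂ] Matrix B B ℂ where
  toFun ρ := ptraceRight (V * ρ * Vᴴ)
  map_add' ρ σ := by
    ext a a'
    simp [ptraceRight, Matrix.mul_add, Matrix.add_mul, Matrix.add_apply,
      Finset.sum_add_distrib]
  map_smul' c ρ := by
    ext a a'
    simp [ptraceRight, Matrix.mul_smul, Matrix.smul_mul, Matrix.smul_apply,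
      Finset.mul_sum, smul_eq_mul]

/-- The complementary channel ρ ↦ tr_B (V ρ Vᴴ) induced by an isometry V : A → B ⊗ E. -/
def complMap {A B E : Type} [Fintype A] [Fintype B] [Fintype E]
    (V : Matrix (B × E) A ℂ) : Matrix A A ℂ →ₗ[ℂ] Matrix E E ℂ where
  toFun ρ := ptraceLeft (V * ρ * Vᴴ)
  map_add' ρ σ := by
    ext a a'
    simp [ptraceLeft, Matrix.mul_add, Matrix.add_mul, Matrix.add_apply,
      Finset.sum_add_distrib]
  map_smul' c ρ := by
    ext a a'
    simp [ptraceLeft, Matrix.mul_smul, Matrix.smul_mul, Matrix.smul_apply,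
      Finset.mul_sum, smul_eq_mul]

/-- A Hadamard channel: some Stinespring dilation has entanglement-breaking complement. -/
def IsHadamardChan {A B : Type} [Fintype A] [DecidableEq A] [Fintype B] [DecidableEq B]
    (Φ : Matrix A A ℂ →ₗ[ℂ] Matrix B B ℂ) : Prop :=
  ∃ (e : ℕ) (V : Matrix (B × Fin e) A ℂ), Vᴴ * V = 1 ∧
    (∀ ρ, Φ ρ = ptraceRight (V * ρ * Vᴴ)) ∧ IsSepState (choi (complMap V))

/-- Covariance of a channel with respect to unitary representations of a group. -/
def CovariantChan {G A B : Type} [Group G] [Fintype A] [DecidableEq A]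
    [Fintype B] [DecidableEq B]
    (U : G →* Matrix.unitaryGroup A ℂ) (V : G →* Matrix.unitaryGroup B ℂ)
    (Φ : Matrix A A ℂ →ₗ[ℂ] Matrix B B ℂ) : Prop :=
  ∀ (g : G) (ρ : Matrix A A ℂ),
    (V g : Matrix B B ℂ) * Φ ρ * (V g : Matrix B B ℂ)ᴴ
      = Φ ((U g : Matrix A A ℂ) * ρ * (U g : Matrix A A ℂ)ᴴ)

/-- A unitary 1-design: averaging over the group sends every matrix to tr(ρ)·I/d. -/
def IsOneDesign {G A : Type} [Group G] [Fintype G] [Fintype A] [DecidableEq A]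
    (U : G →* Matrix.unitaryGroup A ℂ) : Prop :=
  ∀ ρ : Matrix A A ℂ,
    (Fintype.card G : ℂ)⁻¹ • ∑ g, (U g : Matrix A A ℂ) * ρ * (U g : Matrix A A ℂ)ᴴ
      = (ρ.trace * (Fintype.card A : ℂ)⁻¹) • (1 : Matrix A A ℂ)

/-- Pauli X. -/
def σX : Mat 2 := !![0, 1; 1, 0]
/-- Pauli Y. -/
def σY : Mat 2 := !![0, -Complex.I; Complex.I, 0]
/-- Pauli Z. -/
def σZ : Mat 2 := !![1, 0; 0, -1]

/-- The Pauli twirl of a qubit channel. -/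
def pauliTwirl (Φ : Mat 2 →ₗ[ℂ] Mat 2) : Mat 2 →ₗ[ℂ] Mat 2 :=
  ((4 : ℂ)⁻¹) • (Φ + conjMap σX ∘ₗ Φ ∘ₗ conjMap σX + conjMap σY ∘ₗ Φ ∘ₗ conjMap σY
    + conjMap σZ ∘ₗ Φ ∘ₗ conjMap σZ)

/-- The amplitude damping channel with damping parameter p. -/
def ampDamp (p : ℝ) : Mat 2 →ₗ[ℂ] Mat 2 :=
  conjMap (!![1, 0; 0, ((Real.sqrt (1 - p) : ℝ) : ℂ)] : Mat 2)
    + conjMap (!![0, ((Real.sqrt p : ℝ) : ℂ); 0, 0] : Mat 2)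

/-- The qubit depolarizing channel with parameter p. -/
def depol (p : ℝ) : Mat 2 →ₗ[ℂ] Mat 2 :=
  (((1 - p : ℝ) : ℂ)) • LinearMap.id
    + (((p / 3 : ℝ) : ℂ)) • (conjMap σX + conjMap σY + conjMap σZ)

/-- The Z-dephasing channel with parameter p. -/
def deph (p : ℝ) : Mat 2 →ₗ[ℂ] Mat 2 :=
  (((1 - p : ℝ) : ℂ)) • LinearMap.id + ((p : ℝ) : ℂ) • conjMap σZ

/-- The entanglement-breaking parameter: distance to the nearest EB channel. -/
def ebParam {A B : Type} [Fintype A] [DecidableEq A] [Fintype B] [DecidableEq B]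
    (Φ : Matrix A A ℂ →ₗ[ℂ] Matrix B B ℂ) : ℝ :=
  ⨅ M : {M : Matrix A A ℂ →ₗ[ℂ] Matrix B B ℂ // IsEBChannel M}, diamondDist Φ M.1

end

/-!
Let `ψ` be a purification of `ρ` with reference `R ≅ A`. Adjoin a register `G` and form
`w = |G|^{-1/2} ∑_g |g⟩ ⊗ (1 ⊗ U_g) ψ`, whose reduced state on `A` is the twirl of `ρ`. Reading
the register `g` and undoing `V_g` on the output is a channel that maps `(id ⊗ N)(w)` back to
`(id ⊗ N)(ψ)` for every covariant `N`. The reference of `w` is `G × A` rather than `A`, so we pass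
to a purification `ψ'` of the twirled state with reference `A`: two purifications of the same
state are related by a channel on the reference (built here from a spectral decomposition), which
sends `ψ'` to `w`. Composing the two channels and applying data processing gives
`D(N(ψ) ‖ M(ψ)) ≤ D(N(ψ') ‖ M(ψ'))`, and the reduced state of `ψ'` is twirl-invariant.

A vector on `R × A` is written `vec Z` with `Z : Matrix A R ℂ` (system rows, reference columns),
so that an operator `κ` on the reference acts as `Z ↦ Z * κ` and enters Kraus operators as `κᵀ`.
-/

lemma BddAbove.range_of_forall_exists_le {α : Type*} [Preorder α] {ι κ : Sort*} {f : ι → α}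
    {g : κ → α} (hf : BddAbove (Set.range f)) (h : ∀ j, ∃ i, g j ≤ f i) :
    BddAbove (Set.range g) :=
  let ⟨c, hc⟩ := hf
  ⟨c, Set.forall_mem_range.2 fun j => (h j).elim fun i hi => hi.trans (hc ⟨i, rfl⟩)⟩

lemma iSup_eq_iSup_of_forall_exists_le {α : Type*} [ConditionallyCompleteLinearOrder α]
    {ι κ : Sort*} {f : ι → α} {g : κ → α} (hfg : ∀ i, ∃ j, f i ≤ g j)
    (hgf : ∀ j, ∃ i, g j ≤ f i) : ⨆ i, f i = ⨆ j, g j := by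
  rcases isEmpty_or_nonempty ι with hι | hι
  · have : IsEmpty κ := ⟨fun j => (hgf j).elim fun i _ => hι.elim i⟩
    rw [iSup_of_empty', iSup_of_empty']
  have : Nonempty κ := hι.elim fun i => (hfg i).elim fun j _ => ⟨j⟩
  by_cases hf : BddAbove (Set.range f)
  · have hg := hf.range_of_forall_exists_le hgf
    exact le_antisymm (ciSup_le fun i => (hfg i).elim fun j h => h.trans (le_ciSup hg j))
      (ciSup_le fun j => (hgf j).elim fun i h => h.trans (le_ciSup hf i))
  · have hg : ¬ BddAbove (Set.range g) := fun hg => hf (hg.range_of_forall_exists_le hfg)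
    rw [iSup, iSup, csSup_of_not_bddAbove hf, csSup_of_not_bddAbove hg]

lemma Matrix.UnitaryGroup.conjTranspose_mul_self {A : Type} [Fintype A] [DecidableEq A]
    (W : unitaryGroup A ℂ) : (W : Matrix A A ℂ)ᴴ * W = 1 :=
  W.2.1

lemma Matrix.UnitaryGroup.mul_conjTranspose_self {A : Type} [Fintype A] [DecidableEq A]
    (W : unitaryGroup A ℂ) : (W : Matrix A A ℂ) * (W : Matrix A A ℂ)ᴴ = 1 :=
  W.2.2

section Blocks

variable {R R' A B C : Type}

def block (M : Matrix (R × A) (R × A) ℂ) (r r' : R) : Matrix A A ℂ :=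
  of fun a a' => M (r, a) (r', a')

lemma idTensor_apply (Φ : Matrix A A ℂ →ₗ[ℂ] Matrix B B ℂ) (M : Matrix (R × A) (R × A) ℂ)
    (p q : R × B) : idTensor Φ M p q = Φ (block M p.1 q.1) p.2 q.2 := rfl

lemma idTensor_comp (Φ : Matrix B B ℂ →ₗ[ℂ] Matrix C C ℂ) (Ψ : Matrix A A ℂ →ₗ[ℂ] Matrix B B ℂ)
    (M : Matrix (R × A) (R × A) ℂ) : idTensor (Φ ∘ₗ Ψ) M = idTensor Φ (idTensor Ψ M) := rfl

lemma conjMap_apply [Fintype A] [Fintype B] (W : Matrix B A ℂ) (M : Matrix A A ℂ) :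
    conjMap W M = W * M * Wᴴ := rfl

@[simp]
lemma conjMap_one [Fintype A] [DecidableEq A] (M : Matrix A A ℂ) : conjMap 1 M = M := by
  simp [conjMap_apply]

lemma conjMap_conjMap [Fintype A] [Fintype B] [Fintype C] (W : Matrix C B ℂ)
    (W' : Matrix B A ℂ) (M : Matrix A A ℂ) : conjMap W (conjMap W' M) = conjMap (W * W') M := by
  simp only [conjMap_apply, conjTranspose_mul, Matrix.mul_assoc]

lemma block_conjMap_kronecker [Fintype R] [Fintype R'] [Fintype A] [Fintype B]
    (W₁ : Matrix R' R ℂ) (W₂ : Matrix B A ℂ) (M : Matrix (R × A) (R × A) ℂ) (r r' : R') :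
    block (conjMap (W₁ ⊗ₖ W₂) M) r r'
      = ∑ s, ∑ t, (W₁ r s * star (W₁ r' t)) • conjMap W₂ (block M s t) := by
  ext b b'
  simp only [block, conjMap_apply, of_apply, Matrix.sum_apply, Matrix.smul_apply, smul_eq_mul,
    Matrix.mul_apply, conjTranspose_apply, kroneckerMap_apply, Fintype.sum_prod_type,
    Finset.sum_mul, Finset.mul_sum, star_mul']
  conv_lhs => enter [2, t]; rw [Finset.sum_comm]
  rw [Finset.sum_comm]
  exact Finset.sum_congr rfl fun _ _ => Finset.sum_congr rfl fun _ _ =>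
    Finset.sum_congr rfl fun _ _ => Finset.sum_congr rfl fun _ _ => by ring

lemma idTensor_conjMap [Fintype R] [DecidableEq R] [Fintype A] [Fintype B] (W : Matrix B A ℂ)
    (M : Matrix (R × A) (R × A) ℂ) : idTensor (conjMap W) M = conjMap (1 ⊗ₖ W) M := by
  ext ⟨r, b⟩ ⟨r', b'⟩
  change conjMap W (block M r r') b b' = block (conjMap (1 ⊗ₖ W) M) r r' b b'
  simp [block_conjMap_kronecker, one_apply]

lemma idTensor_conjMap_kronecker_one [Fintype R] [Fintype R'] [Fintype A] [DecidableEq A]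
    [Fintype B] [DecidableEq B] (Φ : Matrix A A ℂ →ₗ[ℂ] Matrix B B ℂ) (W : Matrix R' R ℂ)
    (M : Matrix (R × A) (R × A) ℂ) :
    idTensor Φ (conjMap (W ⊗ₖ 1) M) = conjMap (W ⊗ₖ 1) (idTensor Φ M) := by
  ext ⟨r, b⟩ ⟨r', b'⟩
  change Φ (block _ r r') b b' = block (conjMap (W ⊗ₖ 1) (idTensor Φ M)) r r' b b'
  simp only [block_conjMap_kronecker, conjMap_one, map_sum, map_smul]
  rfl

end Blocks

section Channels

variable {R A B C J : Type} [Fintype A] [Fintype B]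

lemma IsCPTP.trace_idTensor [Fintype R] {Φ : Matrix A A ℂ →ₗ[ℂ] Matrix B B ℂ} (hΦ : IsCPTP Φ)
    (M : Matrix (R × A) (R × A) ℂ) : (idTensor Φ M).trace = M.trace := by
  simp only [Matrix.trace, Matrix.diag, Fintype.sum_prod_type]
  exact Finset.sum_congr rfl fun r _ => hΦ.2 (block M r r)

lemma IsCPTP.posSemidef_idTensor [Fintype R] {Φ : Matrix A A ℂ →ₗ[ℂ] Matrix B B ℂ}
    (hΦ : IsCPTP Φ) {M : Matrix (R × A) (R × A) ℂ} (hM : M.PosSemidef) :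
    (idTensor Φ M).PosSemidef := by
  let e := (Fintype.equivFin R).symm
  have h := hΦ.1 _ _ ((posSemidef_submatrix_equiv (e.prodCongr (Equiv.refl A))).2 hM)
  exact (posSemidef_submatrix_equiv (e.prodCongr (Equiv.refl B))).1 h

lemma IsCPTP.isDensity_idTensor [Fintype R] {Φ : Matrix A A ℂ →ₗ[ℂ] Matrix B B ℂ}
    (hΦ : IsCPTP Φ) {M : Matrix (R × A) (R × A) ℂ} (hM : IsDensity M) :
    IsDensity (idTensor Φ M) :=
  ⟨hΦ.posSemidef_idTensor hM.1, by rw [hΦ.trace_idTensor, hM.2]⟩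

lemma IsCPTP.comp [Fintype C] {Φ : Matrix B B ℂ →ₗ[ℂ] Matrix C C ℂ}
    {Ψ : Matrix A A ℂ →ₗ[ℂ] Matrix B B ℂ} (hΦ : IsCPTP Φ) (hΨ : IsCPTP Ψ) :
    IsCPTP (Φ ∘ₗ Ψ) :=
  ⟨fun _ _ hM => hΦ.1 _ _ (hΨ.1 _ _ hM), fun M => (hΦ.2 _).trans (hΨ.2 M)⟩

lemma isCPTP_sum_conjMap [DecidableEq A] [Fintype J] (K : J → Matrix B A ℂ)
    (hK : ∑ j, (K j)ᴴ * K j = 1) : IsCPTP (∑ j, conjMap (K j)) := by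
  refine ⟨fun r M hM => ?_, fun M => ?_⟩
  · have h : idTensor (∑ j, conjMap (K j)) M = ∑ j, conjMap (1 ⊗ₖ K j) M := by
      ext p q
      simp [idTensor_apply, Matrix.sum_apply, ← idTensor_conjMap]
    rw [h]
    exact posSemidef_sum _ fun j _ => hM.mul_mul_conjTranspose_same _
  · simp only [LinearMap.sum_apply, trace_sum, conjMap_apply]
    simp_rw [Matrix.trace_mul_cycle _ M, ← Matrix.trace_sum, ← Finset.sum_mul, hK, Matrix.one_mul]

lemma isCPTP_sum_conjMap_transpose_kronecker {R R' : Type} [Fintype R] [DecidableEq R]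
    [Fintype R'] [DecidableEq B] [Fintype J] (κ : J → Matrix R R' ℂ) (W : J → Matrix B B ℂ)
    (hκ : ∑ j, κ j * (κ j)ᴴ = 1) (hW : ∀ j, (W j)ᴴ * W j = 1) :
    IsCPTP (∑ j, conjMap ((κ j)ᵀ ⊗ₖ W j)) := by
  refine isCPTP_sum_conjMap _ ?_
  calc ∑ j, ((κ j)ᵀ ⊗ₖ W j)ᴴ * ((κ j)ᵀ ⊗ₖ W j) = ∑ j, (κ j * (κ j)ᴴ)ᵀ ⊗ₖ (1 : Matrix B B ℂ) := by
        simp_rw [conjTranspose_kronecker, ← mul_kronecker_mul, hW, transpose_mul]; rfl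
    _ = (∑ j, κ j * (κ j)ᴴ)ᵀ ⊗ₖ (1 : Matrix B B ℂ) := by
        ext; simp only [kroneckerMap_apply, Matrix.sum_apply, transpose_apply, Finset.sum_mul]
    _ = 1 := by rw [hκ, transpose_one, one_kronecker_one]

end Channels

section PureStates

variable {ι κ R R' A B : Type}

lemma posSemidef_vecState [Fintype ι] (u : ι → ℂ) : (vecState u).PosSemidef :=
  posSemidef_vecMulVec_self_star u

lemma conjMap_vecState [Fintype ι] [Fintype κ] (W : Matrix κ ι ℂ) (u : ι → ℂ) :
    conjMap W (vecState u) = vecState (W *ᵥ u) := by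
  change W * vecMulVec u (star u) * Wᴴ = vecMulVec (W *ᵥ u) (star (W *ᵥ u))
  rw [mul_vecMulVec, vecMulVec_mul, star_mulVec]

lemma vecState_smul (c : ℂ) (u : ι → ℂ) : vecState (c • u) = (c * star c) • vecState u := by
  ext i j
  simp only [vecState, of_apply, Pi.smul_apply, smul_eq_mul, star_mul', Matrix.smul_apply]
  ring

@[simp]
lemma vecState_zero : vecState (0 : ι → ℂ) = 0 := by
  ext; simp [vecState]

lemma ptraceLeft_vecState_vec [Fintype R] (Z : Matrix A R ℂ) :
    ptraceLeft (vecState (vec Z)) = Z * Zᴴ := by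
  ext a a'
  simp [ptraceLeft, vecState, vec, Matrix.mul_apply]

lemma trace_ptraceLeft [Fintype R] [Fintype A] (M : Matrix (R × A) (R × A) ℂ) :
    (ptraceLeft M).trace = M.trace := by
  simp only [Matrix.trace, Matrix.diag, ptraceLeft, of_apply, Fintype.sum_prod_type]
  exact Finset.sum_comm

lemma trace_vecState_vec [Fintype R] [Fintype A] (Z : Matrix A R ℂ) :
    (vecState (vec Z)).trace = (Z * Zᴴ).trace := by
  rw [← trace_ptraceLeft, ptraceLeft_vecState_vec]

lemma conjMap_transpose_kronecker_vecState_vec [Fintype R] [Fintype R'] [Fintype A] [Fintype B]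
    (κ : Matrix R R' ℂ) (W : Matrix B A ℂ) (Z : Matrix A R ℂ) :
    conjMap (κᵀ ⊗ₖ W) (vecState (vec Z)) = vecState (vec (W * Z * κ)) := by
  rw [conjMap_vecState, kronecker_mulVec_vec, transpose_transpose]

lemma IsDensity.nonempty [Fintype ι] {ρ : Matrix ι ι ℂ} (hρ : IsDensity ρ) : Nonempty ι := by
  by_contra h
  rw [not_nonempty_iff] at h
  simpa [Matrix.trace] using hρ.2

end PureStates

section Twirl

variable {G A : Type} [Group G] [Fintype G] [Fintype A] [DecidableEq A]
  (U : G →* unitaryGroup A ℂ)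

noncomputable def twirl (ρ : Matrix A A ℂ) : Matrix A A ℂ :=
  (Fintype.card G : ℂ)⁻¹ • ∑ g, (U g : Matrix A A ℂ) * ρ * (U g : Matrix A A ℂ)ᴴ

lemma mul_twirl_mul_conjTranspose (g : G) (ρ : Matrix A A ℂ) :
    (U g : Matrix A A ℂ) * twirl U ρ * (U g : Matrix A A ℂ)ᴴ = twirl U ρ := by
  rw [twirl, Matrix.mul_smul, Matrix.smul_mul, Matrix.mul_sum, Matrix.sum_mul]
  congr 1
  refine Fintype.sum_equiv (Equiv.mulLeft g) _ _ fun h => ?_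
  simp [conjTranspose_mul, Matrix.mul_assoc]

lemma twirl_twirl (ρ : Matrix A A ℂ) : twirl U (twirl U ρ) = twirl U ρ := by
  rw [twirl, Finset.sum_congr rfl fun g _ => mul_twirl_mul_conjTranspose U g ρ, Finset.sum_const,
    Finset.card_univ, ← Nat.cast_smul_eq_nsmul ℂ, smul_smul, inv_mul_cancel₀ (by simp), one_smul]

lemma trace_twirl (ρ : Matrix A A ℂ) : (twirl U ρ).trace = ρ.trace := by
  have h : ∀ g, ((U g : Matrix A A ℂ) * ρ * (U g : Matrix A A ℂ)ᴴ).trace = ρ.trace := fun g => by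
    rw [trace_mul_cycle, UnitaryGroup.conjTranspose_mul_self, Matrix.one_mul]
  rw [twirl, trace_smul, trace_sum, Finset.sum_congr rfl fun g _ => h g, Finset.sum_const,
    Finset.card_univ, nsmul_eq_mul, smul_eq_mul, ← mul_assoc, inv_mul_cancel₀ (by simp), one_mul]

end Twirl

lemma ofReal_inv_sqrt_mul_star (n : ℕ) :
    ((√n : ℝ) : ℂ)⁻¹ * star ((√n : ℝ) : ℂ)⁻¹ = (n : ℂ)⁻¹ := by
  rw [star_inv₀, Complex.star_def, Complex.conj_ofReal, ← mul_inv, ← Complex.ofReal_mul,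
    Real.mul_self_sqrt n.cast_nonneg, Complex.ofReal_natCast]

def ket {G : Type} (R : Type) [DecidableEq G] [DecidableEq R] (g : G) : Matrix (G × R) R ℂ :=
  of fun p r => if p = (g, r) then 1 else 0

lemma sum_ket_mul_conjTranspose {G R : Type} [Fintype G] [DecidableEq G] [Fintype R]
    [DecidableEq R] :
    ∑ g : G, ket R g * (ket R g)ᴴ = 1 := by
  ext ⟨g, r⟩ ⟨g', r'⟩
  simp_rw [Matrix.sum_apply, Matrix.mul_apply]
  simp only [ket, of_apply, conjTranspose_apply, one_apply, Prod.mk.injEq, apply_ite star,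
    star_one, star_zero, mul_ite, mul_one, mul_zero, ite_and]
  by_cases hg : g = g' <;> by_cases hr : r = r' <;> simp [hg, hr]

section Purification

variable {G A R : Type} [Group G] [Fintype G] [Fintype A] [DecidableEq A] [Fintype R]
  (U : G →* unitaryGroup A ℂ)

-- `vec (twirlPurification U Z)` is the vector `w` built from `ψ = vec Z` in the header.
noncomputable def twirlPurification (Z : Matrix A R ℂ) : Matrix A (G × R) ℂ :=
  of fun a p => ((√(Fintype.card G) : ℝ) : ℂ)⁻¹ * ((U p.1 : Matrix A A ℂ) * Z) a p.2

lemma twirlPurification_mul_ket [DecidableEq G] [DecidableEq R] (Z : Matrix A R ℂ) (g : G) :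
    twirlPurification U Z * ket R g
      = ((√(Fintype.card G) : ℝ) : ℂ)⁻¹ • ((U g : Matrix A A ℂ) * Z) := by
  ext a r
  simp [twirlPurification, ket, Matrix.mul_apply]

lemma twirlPurification_mul_conjTranspose (Z : Matrix A R ℂ) :
    twirlPurification U Z * (twirlPurification U Z)ᴴ = twirl U (Z * Zᴴ) := by
  have h : twirlPurification U Z * (twirlPurification U Z)ᴴ
      = (((√(Fintype.card G) : ℝ) : ℂ)⁻¹ * star ((√(Fintype.card G) : ℝ) : ℂ)⁻¹) •
        ∑ g, ((U g : Matrix A A ℂ) * Z) * ((U g : Matrix A A ℂ) * Z)ᴴ := by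
    ext a a'
    simp only [twirlPurification, Matrix.mul_apply, conjTranspose_apply, of_apply,
      Matrix.smul_apply, Matrix.sum_apply, Fintype.sum_prod_type, smul_eq_mul, Finset.mul_sum]
    exact Finset.sum_congr rfl fun _ _ => Finset.sum_congr rfl fun _ _ => by
      rw [← Finset.mul_sum, ← Finset.mul_sum, star_mul']; ring
  rw [h, ofReal_inv_sqrt_mul_star, twirl]
  simp only [conjTranspose_mul, Matrix.mul_assoc]

end Purification

section Transfer

variable {S R' : Type} [Fintype S] [DecidableEq S] [Fintype R'] [DecidableEq R'] [Nonempty R']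

lemma exists_kraus_factorization_of_mul_conjTranspose_eq_diagonal (Y : Matrix S R' ℂ) (s : S → ℝ)
    (hY : Y * Yᴴ = diagonal fun i => ((s i ^ 2 : ℝ) : ℂ)) :
    ∃ κ : Option S → Matrix S R' ℂ, ∑ j, κ j * (κ j)ᴴ = 1 ∧
      diagonal (fun i => (s i : ℂ)) * κ none = Y ∧
      ∀ i, diagonal (fun i => (s i : ℂ)) * κ (some i) = 0 := by
  obtain ⟨p₀⟩ := ‹Nonempty R'›
  have hrow : ∀ i, s i = 0 → Y i = 0 := fun i hi => by
    have h := congr_fun (congr_fun hY i) i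
    simp only [diagonal_apply_eq, hi] at h
    exact dotProduct_self_star_eq_zero.1 (by simpa [Matrix.mul_apply, dotProduct] using h)
  -- `(s i)⁻¹ = 0` when `s i = 0`: those rows of `Y` vanish, and `κ (some i)` restores the trace.
  refine ⟨fun j => j.elim (diagonal (fun i => ((s i)⁻¹ : ℂ)) * Y)
    (fun i => single i p₀ (if s i = 0 then 1 else 0)), ?_, ?_, fun i => ?_⟩
  · have hnone : (diagonal (fun i => ((s i)⁻¹ : ℂ)) * Y) * (diagonal (fun i => ((s i)⁻¹ : ℂ)) * Y)ᴴ
        = diagonal fun i => if s i = 0 then 0 else 1 := by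
      rw [conjTranspose_mul, diagonal_conjTranspose, Matrix.mul_assoc, ← Matrix.mul_assoc Y, hY,
        diagonal_mul_diagonal, diagonal_mul_diagonal]
      congr 1
      funext i
      by_cases hi : s i = 0
      · simp [hi]
      · simp [hi]
        field_simp
    have hsome : ∀ i, single i p₀ (if s i = 0 then (1 : ℂ) else 0) *
        (single i p₀ (if s i = 0 then (1 : ℂ) else 0))ᴴ
          = single i i (if s i = 0 then 1 else 0) := by
      intro i
      rw [conjTranspose_single, single_mul_single_same]
      split_ifs <;> simp
    simp only [Fintype.sum_option, Option.elim, hnone, hsome, sum_single_eq_diagonal, diagonal_add]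
    rw [← diagonal_one]
    congr 1
    funext i
    split_ifs <;> simp
  · ext i r
    by_cases hi : s i = 0
    · simp [hi, hrow i hi]
    · simp [diagonal_mul, hi]
  · ext k r
    by_cases hi : s i = 0
    · rcases eq_or_ne i k with rfl | hik
      · simp [diagonal_mul, single_apply, hi]
      · simp [diagonal_mul, hik]
    · simp [hi]

lemma exists_square_kraus_factorization (Y : Matrix S R' ℂ) :
    ∃ (X : Matrix S S ℂ) (κ : Option S → Matrix S R' ℂ), X * Xᴴ = Y * Yᴴ ∧
      ∑ j, κ j * (κ j)ᴴ = 1 ∧ X * κ none = Y ∧ ∀ i, X * κ (some i) = 0 := by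
  have hP := posSemidef_self_mul_conjTranspose Y
  set C : Matrix S S ℂ := (hP.1.eigenvectorUnitary : Matrix S S ℂ)
  have hC : C * Cᴴ = 1 := UnitaryGroup.mul_conjTranspose_self _
  set s : S → ℝ := fun i => √(hP.1.eigenvalues i)
  have hdiag : (Cᴴ * Y) * (Cᴴ * Y)ᴴ = diagonal fun i => ((s i ^ 2 : ℝ) : ℂ) := by
    have h := hP.1.conjStarAlgAut_star_eigenvectorUnitary
    simp only [Unitary.conjStarAlgAut_apply, Unitary.coe_star, star_eq_conjTranspose,
      conjTranspose_conjTranspose] at h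
    simp only [s, Real.sq_sqrt (hP.eigenvalues_nonneg _)]
    rw [conjTranspose_mul, conjTranspose_conjTranspose, ← Matrix.mul_assoc, Matrix.mul_assoc _ Y]
    exact h
  obtain ⟨κ, hsum, hnone, hsome⟩ :=
    exists_kraus_factorization_of_mul_conjTranspose_eq_diagonal (Cᴴ * Y) s hdiag
  have hsq : diagonal (fun i => (s i : ℂ)) * (diagonal fun i => (s i : ℂ))ᴴ
      = (Cᴴ * Y) * (Cᴴ * Y)ᴴ := by
    rw [hdiag, diagonal_conjTranspose, diagonal_mul_diagonal]
    congr 1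
    funext i
    simp [sq]
  refine ⟨C * diagonal (fun i => (s i : ℂ)), κ, ?_, hsum, ?_, fun i => ?_⟩
  · calc _ = C * ((Cᴴ * Y) * (Cᴴ * Y)ᴴ) * Cᴴ := by
          rw [← hsq, conjTranspose_mul]; simp only [Matrix.mul_assoc]
      _ = (C * Cᴴ) * (Y * Yᴴ) * (C * Cᴴ) := by
          simp only [conjTranspose_mul, conjTranspose_conjTranspose, Matrix.mul_assoc]
      _ = Y * Yᴴ := by rw [hC, Matrix.one_mul, Matrix.mul_one]
  · rw [Matrix.mul_assoc, hnone, ← Matrix.mul_assoc, hC, Matrix.one_mul]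
  · rw [Matrix.mul_assoc, hsome, Matrix.mul_zero]

end Transfer

lemma sum_conjMap_transpose_kronecker_one_idTensor {S R' A B : Type} [Fintype S] [Fintype R']
    [Fintype A] [DecidableEq A] [Fintype B] [DecidableEq B] (Φ : Matrix A A ℂ →ₗ[ℂ] Matrix B B ℂ)
    {κ : Option S → Matrix S R' ℂ} {X : Matrix A S ℂ} {Y : Matrix A R' ℂ}
    (hnone : X * κ none = Y) (hsome : ∀ i, X * κ (some i) = 0) :
    (∑ j, conjMap ((κ j)ᵀ ⊗ₖ (1 : Matrix B B ℂ))) (idTensor Φ (vecState (vec X)))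
      = idTensor Φ (vecState (vec Y)) := by
  simp only [Fintype.sum_option, LinearMap.add_apply, LinearMap.sum_apply,
    ← idTensor_conjMap_kronecker_one, conjMap_transpose_kronecker_vecState_vec, Matrix.one_mul,
    hnone, hsome, vec_zero, vecState_zero, map_zero, Finset.sum_const_zero, add_zero]

section Covariance

variable {G A B R : Type} [Group G] [Fintype A] [DecidableEq A] [Fintype B] [DecidableEq B]
  [Fintype R] [DecidableEq R] {U : G →* unitaryGroup A ℂ} {V : G →* unitaryGroup B ℂ}
  {Φ : Matrix A A ℂ →ₗ[ℂ] Matrix B B ℂ}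

lemma CovariantChan.idTensor_conjMap_one_kronecker (hΦ : CovariantChan U V Φ) (g : G)
    (M : Matrix (R × A) (R × A) ℂ) :
    idTensor Φ (conjMap ((1 : Matrix R R ℂ) ⊗ₖ (U g : Matrix A A ℂ)) M)
      = conjMap ((1 : Matrix R R ℂ) ⊗ₖ (V g : Matrix B B ℂ)) (idTensor Φ M) := by
  rw [← idTensor_conjMap, ← idTensor_conjMap, ← idTensor_comp, ← idTensor_comp]
  exact congrArg (fun Ψ => idTensor Ψ M) (LinearMap.ext fun ρ => (hΦ g ρ).symm)

lemma CovariantChan.sum_conjMap_ket_kronecker_idTensor [Fintype G] [DecidableEq G]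
    (hΦ : CovariantChan U V Φ) (Z : Matrix A R ℂ) :
    (∑ g, conjMap ((ket R g)ᵀ ⊗ₖ (V g : Matrix B B ℂ)ᴴ))
        (idTensor Φ (vecState (vec (twirlPurification U Z))))
      = idTensor Φ (vecState (vec Z)) := by
  have hterm : ∀ g, conjMap ((ket R g)ᵀ ⊗ₖ (V g : Matrix B B ℂ)ᴴ)
      (idTensor Φ (vecState (vec (twirlPurification U Z))))
      = (Fintype.card G : ℂ)⁻¹ • idTensor Φ (vecState (vec Z)) := fun g => by
    calc _ = conjMap (1 ⊗ₖ (V g : Matrix B B ℂ)ᴴ) (idTensor Φ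
            (conjMap ((ket R g)ᵀ ⊗ₖ 1) (vecState (vec (twirlPurification U Z))))) := by
          rw [idTensor_conjMap_kronecker_one, conjMap_conjMap, ← mul_kronecker_mul,
            Matrix.one_mul, Matrix.mul_one]
      _ = (Fintype.card G : ℂ)⁻¹ • conjMap (1 ⊗ₖ (V g : Matrix B B ℂ)ᴴ)
            (idTensor Φ (conjMap (1 ⊗ₖ (U g : Matrix A A ℂ)) (vecState (vec Z)))) := by
          rw [conjMap_transpose_kronecker_vecState_vec, Matrix.one_mul, twirlPurification_mul_ket,
            vec_smul, vecState_smul, ofReal_inv_sqrt_mul_star, vec_mul_eq_mulVec,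
            ← conjMap_vecState, map_smul, map_smul]
      _ = (Fintype.card G : ℂ)⁻¹ • idTensor Φ (vecState (vec Z)) := by
          rw [CovariantChan.idTensor_conjMap_one_kronecker hΦ, conjMap_conjMap, ← mul_kronecker_mul,
            Matrix.one_mul, UnitaryGroup.conjTranspose_mul_self, one_kronecker_one, conjMap_one]
  rw [LinearMap.sum_apply, Finset.sum_congr rfl fun g _ => hterm g, Finset.sum_const,
    Finset.card_univ, ← Nat.cast_smul_eq_nsmul ℂ, smul_smul, mul_inv_cancel₀ (by simp), one_smul]

end Covariance

lemma exists_twirled_purification_le {G A B : Type} [Group G] [Fintype G]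
    [Fintype A] [DecidableEq A] [Fintype B] [DecidableEq B]
    {U : G →* unitaryGroup A ℂ} {V : G →* unitaryGroup B ℂ}
    {N M : Matrix A A ℂ →ₗ[ℂ] Matrix B B ℂ} (hN : IsCPTP N) (hM : IsCPTP M)
    (hcovN : CovariantChan U V N) (hcovM : CovariantChan U V M) (𝒟 : GenDivergence)
    {Z : Matrix A A ℂ} (hZ : IsDensity (vecState (vec Z))) :
    ∃ X : Matrix A A ℂ, IsDensity (vecState (vec X)) ∧ X * Xᴴ = twirl U (Z * Zᴴ) ∧
      𝒟.D (idTensor N (vecState (vec Z))) (idTensor M (vecState (vec Z)))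
        ≤ 𝒟.D (idTensor N (vecState (vec X))) (idTensor M (vecState (vec X))) := by
  classical
  have : Nonempty A := hZ.nonempty.map Prod.fst
  obtain ⟨X, κ, hX, hκ, hnone, hsome⟩ :=
    exists_square_kraus_factorization (twirlPurification U Z)
  rw [twirlPurification_mul_conjTranspose] at hX
  have hXdens : IsDensity (vecState (vec X)) := by
    refine ⟨posSemidef_vecState _, ?_⟩
    rw [trace_vecState_vec, hX, trace_twirl, ← trace_vecState_vec, hZ.2]
  let Ξ := ∑ j, conjMap ((κ j)ᵀ ⊗ₖ (1 : Matrix B B ℂ))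
  let Θ := ∑ g, conjMap ((ket A g)ᵀ ⊗ₖ (V g : Matrix B B ℂ)ᴴ)
  have hΛ : IsCPTP (Θ ∘ₗ Ξ) := by
    refine IsCPTP.comp (isCPTP_sum_conjMap_transpose_kronecker _ _ sum_ket_mul_conjTranspose
      fun g => ?_) (isCPTP_sum_conjMap_transpose_kronecker _ _ hκ fun _ => by simp)
    rw [conjTranspose_conjTranspose, UnitaryGroup.mul_conjTranspose_self]
  have hrecover : ∀ Φ, CovariantChan U V Φ →
      (Θ ∘ₗ Ξ) (idTensor Φ (vecState (vec X))) = idTensor Φ (vecState (vec Z)) := fun Φ hΦ => by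
    rw [LinearMap.comp_apply, sum_conjMap_transpose_kronecker_one_idTensor Φ hnone hsome,
      CovariantChan.sum_conjMap_ket_kronecker_idTensor hΦ]
  refine ⟨X, hXdens, hX, ?_⟩
  rw [← hrecover N hcovN, ← hrecover M hcovM]
  exact 𝒟.data_proc _ hΛ _ _ (hN.isDensity_idTensor hXdens) (hM.posSemidef_idTensor hXdens.1)

/-- For jointly covariant channels, the generalized channel divergence is
achieved on pure states whose reduced state is invariant under the symmetrizing channel. -/
theorem chanDiv_eq_sup_over_invariant_inputs
    {G A B : Type} [Group G] [Fintype G]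
    [Fintype A] [DecidableEq A] [Fintype B] [DecidableEq B]
    (U : G →* Matrix.unitaryGroup A ℂ) (V : G →* Matrix.unitaryGroup B ℂ)
    (N M : Matrix A A ℂ →ₗ[ℂ] Matrix B B ℂ) (hN : IsCPTP N) (hM : IsCPTP M)
    (hcovN : CovariantChan U V N) (hcovM : CovariantChan U V M)
    (𝒟 : GenDivergence) :
    chanDiv 𝒟 N M =
      ⨆ ψ : {v : A × A → ℂ // IsDensity (vecState v) ∧
          ptraceLeft (vecState v) = (Fintype.card G : ℂ)⁻¹ •
            ∑ g, (U g : Matrix A A ℂ) * ptraceLeft (vecState v) * (U g : Matrix A A ℂ)ᴴ},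
        𝒟.D (idTensor N (vecState ψ.1)) (idTensor M (vecState ψ.1)) := by
  refine iSup_eq_iSup_of_forall_exists_le (fun ⟨ψ, hψ⟩ => ?_) fun ⟨ψ, hψ, _⟩ => ⟨⟨ψ, hψ⟩, le_rfl⟩
  obtain ⟨Z, rfl⟩ := vec_bijective.surjective ψ
  obtain ⟨X, hXdens, hX, hle⟩ := exists_twirled_purification_le hN hM hcovN hcovM 𝒟 hψ
  refine ⟨⟨vec X, hXdens, ?_⟩, hle⟩
  change _ = twirl U _
  rw [ptraceLeft_vecState_vec, hX, twirl_twirl]
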